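/- Let c ∈ F_q with x^2 − x − c irreducible over F_q, A = [[0,1],[c,1]], D the order of [A] in PGL_2(F_q), and j, m positive integers with j ≤ D−1 and gcd(j, D) = 1. Write A^j = [[a_j, b_j],[c_j, d_j]] and let F_{A^j,m}(x) = b_j x^{q^m+1} − a_j x^{q^m} + d_j x − c_j. Then F_{A^j,m} has degree q^m + 1 and has no root in F_q. -/

import Mathlib

open Polynomial

variable {F : Type*} [Field F] [Fintype F]

/-- The order of `[A]` in `PGL₂(F)`: the least `D ≥ 1` such that `A ^ D` is a
(nonzero) scalar matrix. -/
noncomputable def pglOrder (A : Matrix (Fin 2) (Fin 2) F) : ℕ :=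
  sInf {D : ℕ | 0 < D ∧ ∃ c : F, c ≠ 0 ∧ A ^ D = c • (1 : Matrix (Fin 2) (Fin 2) F)}

/-- For `B = [[a,b],[c,d]]`, the polynomial `F_{B,r} = b x^{q^r+1} - a x^{q^r} + d x - c`. -/
noncomputable def FPoly (B : Matrix (Fin 2) (Fin 2) F) (r : ℕ) : F[X] :=
  C (B 0 1) * X ^ (Fintype.card F ^ r + 1) - C (B 0 0) * X ^ (Fintype.card F ^ r) +
    C (B 1 1) * X - C (B 1 0)

/-! By Cayley–Hamilton `A ^ j = u • 1 + v • A`, and `v ≠ 0` because `[A] ^ j` is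
not the identity of `PGL₂(F)` for `0 < j < D`. So the leading coefficient `v` of `F_{A^j,m}` is
nonzero, and on `F`, where `x ^ (q ^ m) = x`, the polynomial evaluates to `v ((-x)^2 - (-x) - c)`,
which does not vanish since `X ^ 2 - X - c` has no root in `F`. -/

theorem Matrix.sq_fin_two {R : Type*} [CommRing R] (A : Matrix (Fin 2) (Fin 2) R) :
    A ^ 2 = A.trace • A - A.det • 1 := by
  ext i k
  fin_cases i <;> fin_cases k <;>
    simp [sq, Matrix.mul_apply, Matrix.trace_fin_two, Matrix.det_fin_two] <;> ring

theorem Matrix.exists_pow_eq_smul_one_add_smul {R : Type*} [CommRing R]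
    (A : Matrix (Fin 2) (Fin 2) R) (n : ℕ) : ∃ u v : R, A ^ n = u • 1 + v • A := by
  induction n with
  | zero => exact ⟨1, 0, by simp⟩
  | succ n ih =>
    obtain ⟨u, v, h⟩ := ih
    refine ⟨-v * A.det, u + v * A.trace, ?_⟩
    rw [pow_succ, h, add_mul, smul_mul_assoc, smul_mul_assoc, one_mul, ← sq, A.sq_fin_two]
    module

omit [Fintype F] in
theorem pow_ne_smul_one_of_lt_pglOrder {A : Matrix (Fin 2) (Fin 2) F} (hA : A.det ≠ 0)
    {j : ℕ} (hj : 0 < j) (hjD : j < pglOrder A) (u : F) : A ^ j ≠ u • 1 := by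
  intro hju
  have hu : u ≠ 0 := by
    rintro rfl
    have hdet := congrArg Matrix.det hju
    rw [Matrix.det_pow, zero_smul, Matrix.det_zero] at hdet
    exact pow_ne_zero j hA hdet
  exact Nat.notMem_of_lt_sInf hjD ⟨hj, u, hu, hju⟩

theorem FPoly_natDegree (B : Matrix (Fin 2) (Fin 2) F) (hB : B 0 1 ≠ 0) (r : ℕ) :
    (FPoly B r).natDegree = Fintype.card F ^ r + 1 := by
  unfold FPoly
  compute_degree!

theorem FPoly_eval (B : Matrix (Fin 2) (Fin 2) F) (r : ℕ) (x : F) :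
    (FPoly B r).eval x = B 0 1 * x ^ 2 - B 0 0 * x + B 1 1 * x - B 1 0 := by
  simp only [FPoly, eval_sub, eval_add, eval_mul, eval_C, eval_pow, eval_X]
  rw [pow_succ, FiniteField.pow_card_pow]
  ring

theorem FPoly_smul_one_add_smul_companion_eval (u v c : F) (r : ℕ) (x : F) :
    (FPoly (u • 1 + v • !![0, 1; c, 1]) r).eval x = v * ((-x) ^ 2 - -x - c) := by
  rw [FPoly_eval]
  simp only [Matrix.add_apply, Matrix.smul_apply, Matrix.one_apply_eq, ne_eq, zero_ne_one,
    one_ne_zero, not_false_eq_true, Matrix.one_apply_ne, Matrix.of_apply, Matrix.cons_val',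
    Matrix.cons_val_zero, Matrix.cons_val_one, Matrix.cons_val_fin_one, smul_eq_mul]
  ring

theorem FPoly_degree_no_linear_factor_general (c : F) (hirr : Irreducible (X ^ 2 - X - C c))
    (A : Matrix (Fin 2) (Fin 2) F) (hA : A = !![0, 1; c, 1])
    (j m : ℕ) (hj1 : 1 ≤ j) (hj2 : j ≤ pglOrder A - 1) :
    (FPoly (A ^ j) m).natDegree = Fintype.card F ^ m + 1 ∧
    ∀ x : F, (FPoly (A ^ j) m).eval x ≠ 0 := by
  have hroot (x : F) : x ^ 2 - x - c ≠ 0 := by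
    have hdeg : (X ^ 2 - X - C c).natDegree = 2 := by compute_degree!
    simpa using hirr.not_isRoot_of_natDegree_ne_one (by omega) (x := x)
  have hdet : A.det ≠ 0 := by simpa [hA, Matrix.det_fin_two] using hroot 0
  obtain ⟨u, v, huv⟩ := A.exists_pow_eq_smul_one_add_smul j
  have hv : v ≠ 0 := by
    rintro rfl
    exact pow_ne_smul_one_of_lt_pglOrder hdet hj1 (by omega) u (by simpa using huv)
  rw [huv, hA]
  refine ⟨FPoly_natDegree _ (by simpa) m, fun x => ?_⟩
  rw [FPoly_smul_one_add_smul_companion_eval]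
  exact mul_ne_zero hv (hroot (-x))

theorem FPoly_degree_no_linear_factor (c : F) (hirr : Irreducible (X ^ 2 - X - C c))
    (A : Matrix (Fin 2) (Fin 2) F) (hA : A = !![0, 1; c, 1])
    (j m : ℕ) (hj1 : 1 ≤ j) (hj2 : j ≤ pglOrder A - 1) (hjD : Nat.gcd j (pglOrder A) = 1)
    (hm : 1 ≤ m) :
    (FPoly (A ^ j) m).natDegree = Fintype.card F ^ m + 1 ∧
    ∀ x : F, (FPoly (A ^ j) m).eval x ≠ 0 :=
  FPoly_degree_no_linear_factor_general c hirr A hA j m hj1 hj2
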